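/- arXiv:1807.10678 — 3 statements merged into one kernel-verified Lean document; each statement's English description precedes it below -/
import Mathlib

section
/- For any right-continuous distribution on the reals, if S denotes its survival function and S^± = (S + S_-)/2 the average of S and its left-continuous version S_-, then -∫ S^± dS = 1/2, where the integral is the Lebesgue–Stieltjes integral with respect to the (negative of the) measure induced by S. -/
open MeasureTheory Set

lemma aux_meas_Ioi (μ : Measure ℝ) : Measurable fun t => μ (Ioi t) :=
  Antitone.measurable (fun a b hab => measure_mono (Ioi_subset_Ioi hab))

lemma aux_meas_Ici (μ : Measure ℝ) : Measurable fun t => μ (Ici t) :=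
  Antitone.measurable (fun a b hab => measure_mono (Ici_subset_Ici.mpr hab))

lemma aux_sum (μ : Measure ℝ) [IsProbabilityMeasure μ] :
    (∫⁻ t, μ (Ioi t) + μ (Ici t) ∂μ) = 1 := by
  have hlt : MeasurableSet {p : ℝ × ℝ | p.1 < p.2} := measurableSet_lt measurable_fst measurable_snd
  have hle : MeasurableSet {p : ℝ × ℝ | p.1 ≤ p.2} := measurableSet_le measurable_fst measurable_snd
  have hA : (∫⁻ t, μ (Ioi t) ∂μ) = (μ.prod μ) {p : ℝ × ℝ | p.1 < p.2} := by
    rw [Measure.prod_apply hlt]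
    rfl
  have hB : (∫⁻ t, μ (Ici t) ∂μ) = (μ.prod μ) {p : ℝ × ℝ | p.1 ≤ p.2} := by
    rw [Measure.prod_apply hle]
    rfl
  have hswap : (μ.prod μ) {p : ℝ × ℝ | p.2 < p.1} = (μ.prod μ) {p : ℝ × ℝ | p.1 < p.2} := by
    have := Measure.prod_swap (μ := μ) (ν := μ)
    calc (μ.prod μ) {p : ℝ × ℝ | p.2 < p.1}
        = (μ.prod μ) (Prod.swap ⁻¹' {p : ℝ × ℝ | p.1 < p.2}) := by
          rfl
      _ = (Measure.map Prod.swap (μ.prod μ)) {p : ℝ × ℝ | p.1 < p.2} := by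
          rw [Measure.map_apply measurable_swap hlt]
      _ = (μ.prod μ) {p : ℝ × ℝ | p.1 < p.2} := by rw [this]
  have hcompl : {p : ℝ × ℝ | p.1 ≤ p.2} = {p : ℝ × ℝ | p.2 < p.1}ᶜ := by
    ext p; simp [not_lt]
  rw [lintegral_add_left (aux_meas_Ioi μ), hA, hB, hcompl,
    measure_compl (measurableSet_lt measurable_snd measurable_fst) (measure_ne_top _ _),
    hswap]
  have h1 : (μ.prod μ) univ = 1 := measure_univ
  have hle1 : (μ.prod μ) {p : ℝ × ℝ | p.1 < p.2} ≤ 1 := by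
    rw [← h1]; exact measure_mono (subset_univ _)
  rw [h1]
  exact add_tsub_cancel_of_le hle1

/-- For a probability distribution `μ` on ℝ with survival function `S t = μ(Ioi t)` and
left-continuous version `S₋ t = μ(Ici t)`, the normalized identity `-∫ S^± dS = 1/2` holds,
where `-dS` is the measure `μ` itself. -/
theorem stmt0 (μ : Measure ℝ) [IsProbabilityMeasure μ] :
    ∫ t, ((μ (Ioi t)).toReal + (μ (Ici t)).toReal) / 2 ∂μ = 1 / 2 := by
  have hcong : ∀ t : ℝ, ((μ (Ioi t)).toReal + (μ (Ici t)).toReal) / 2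
      = (μ (Ioi t) + μ (Ici t)).toReal / 2 := by
    intro t
    rw [ENNReal.toReal_add (measure_ne_top _ _) (measure_ne_top _ _)]
  simp_rw [hcong, div_eq_mul_inv]
  rw [integral_mul_const]
  have hm : AEMeasurable (fun t => μ (Ioi t) + μ (Ici t)) μ :=
    ((aux_meas_Ioi μ).add (aux_meas_Ici μ)).aemeasurable
  have hfin : ∀ᵐ t ∂μ, μ (Ioi t) + μ (Ici t) < ⊤ :=
    Filter.Eventually.of_forall fun t =>
      ENNReal.add_lt_top.mpr ⟨measure_lt_top _ _, measure_lt_top _ _⟩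
  rw [integral_toReal hm hfin, aux_sum μ]
  norm_num
end

section
/- If T and Z are independent real-valued random variables with survival functions S_T and S_Z respectively, then P(T > Z) + (1/2) P(T = Z) = -∫ S_T^± dS_Z, where S_T^± is the average of S_T and its left-continuous version and the integral is Lebesgue–Stieltjes with respect to the distribution of Z. -/
open MeasureTheory Set

/-- For independent random variables `T ~ μ` and `Z ~ ν`,
`P(T > Z) + (1/2) P(T = Z) = -∫ S_T^± dS_Z = ∫ S_T^± dν`. -/
theorem stmt1 (μ ν : Measure ℝ) [IsProbabilityMeasure μ] [IsProbabilityMeasure ν] :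
    ((μ.prod ν) {q : ℝ × ℝ | q.2 < q.1}).toReal
      + (1 / 2) * ((μ.prod ν) {q : ℝ × ℝ | q.1 = q.2}).toReal
      = ∫ t, ((μ (Ioi t)).toReal + (μ (Ici t)).toReal) / 2 ∂ν := by
  have hs1 : MeasurableSet {q : ℝ × ℝ | q.2 < q.1} := measurableSet_lt measurable_snd measurable_fst
  have hs2 : MeasurableSet {q : ℝ × ℝ | q.1 = q.2} := measurableSet_eq_fun measurable_fst measurable_snd
  have h1 : (μ.prod ν) {q : ℝ × ℝ | q.2 < q.1} = ∫⁻ z, μ (Ioi z) ∂ν := by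
    rw [Measure.prod_apply_symm hs1]; rfl
  have h2 : (μ.prod ν) {q : ℝ × ℝ | q.1 = q.2} = ∫⁻ z, μ {z} ∂ν := by
    rw [Measure.prod_apply_symm hs2]
    exact lintegral_congr fun z => by congr 1
  have hmIoi : Measurable fun z : ℝ => μ (Ioi z) := by
    exact measurable_measure_prodMk_right (μ := μ) (β := ℝ) hs1
  have hmIci : Measurable fun z : ℝ => μ (Ici z) := by
    have hs : MeasurableSet {q : ℝ × ℝ | q.2 ≤ q.1} := measurableSet_le measurable_snd measurable_fst
    exact measurable_measure_prodMk_right (μ := μ) (β := ℝ) hs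
  have hmsing : Measurable fun z : ℝ => μ {z} := by
    have h := measurable_measure_prodMk_right (μ := μ) (β := ℝ) hs2
    have : (fun z : ℝ => μ {z}) = fun z : ℝ => μ ((fun x => (x, z)) ⁻¹' {q : ℝ × ℝ | q.1 = q.2}) := by
      funext z; congr 1
    rw [this]; exact h
  have hlt1 : ∀ (s : Set ℝ), μ s < ⊤ := fun s => lt_of_le_of_lt (measure_mono (subset_univ s)) (by simp)
  -- convert toReal of lintegrals to integrals
  have e1 : ((μ.prod ν) {q : ℝ × ℝ | q.2 < q.1}).toReal = ∫ z, (μ (Ioi z)).toReal ∂ν := by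
    rw [h1, ← integral_toReal hmIoi.aemeasurable (Filter.Eventually.of_forall fun z => hlt1 _)]
  have e2 : ((μ.prod ν) {q : ℝ × ℝ | q.1 = q.2}).toReal = ∫ z, (μ {z}).toReal ∂ν := by
    rw [h2, ← integral_toReal hmsing.aemeasurable (Filter.Eventually.of_forall fun z => hlt1 _)]
  -- integrability
  have int_of : ∀ (f : ℝ → Set ℝ), Measurable (fun z => μ (f z)) →
      Integrable (fun z => (μ (f z)).toReal) ν := by
    intro f hf
    refine ⟨(ENNReal.measurable_toReal.comp hf).aestronglyMeasurable, ?_⟩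
    refine HasFiniteIntegral.mono' (g := fun _ => (1 : ℝ)) (integrable_const (1:ℝ)).2 ?_
    refine Filter.Eventually.of_forall fun z => ?_
    rw [Real.norm_eq_abs, abs_of_nonneg ENNReal.toReal_nonneg]
    have : μ (f z) ≤ 1 := prob_le_one
    exact ENNReal.toReal_le_of_le_ofReal one_pos.le (by simpa using this)
  have iIoi := int_of (fun z => Ioi z) hmIoi
  have iIci := int_of (fun z => Ici z) hmIci
  have ising := int_of (fun z => {z}) hmsing
  -- pointwise: μ {z} = μ (Ici z) - μ (Ioi z)
  have hsing : ∀ z : ℝ, (μ {z}).toReal = (μ (Ici z)).toReal - (μ (Ioi z)).toReal := by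
    intro z
    have hd : Ici z = {z} ∪ Ioi z := by ext x; simp [le_iff_lt_or_eq, or_comm, eq_comm]
    have : μ (Ici z) = μ {z} + μ (Ioi z) := by
      rw [hd, measure_union (by simp [Set.disjoint_left]) measurableSet_Ioi]
    rw [this, ENNReal.toReal_add (hlt1 _).ne (hlt1 _).ne]; ring
  rw [e1, e2]
  have : ∫ z, (μ {z}).toReal ∂ν = (∫ z, (μ (Ici z)).toReal ∂ν) - ∫ z, (μ (Ioi z)).toReal ∂ν := by
    rw [← integral_sub iIci iIoi]
    exact integral_congr_ae (Filter.Eventually.of_forall fun z => hsing z)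
  rw [this]
  rw [show (fun t => ((μ (Ioi t)).toReal + (μ (Ici t)).toReal) / 2)
      = fun t => (μ (Ioi t)).toReal * (1/2) + (μ (Ici t)).toReal * (1/2) by ext t; ring]
  rw [integral_add (iIoi.mul_const _) (iIci.mul_const _), integral_mul_const, integral_mul_const]
  ring
end

section
/- Let T_1, ..., T_d be independent random variables with survival functions S_1, ..., S_d, let S̄ = (1/d)∑_i S_i, and define p_i = -∫ S_i^± dS̄ (the Lebesgue–Stieltjes integral against the measure induced by S̄). Then (1/d) ∑_{i=1}^d p_i = 1/2. -/
/-!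
Writing `S_μ^±(t) = (μ (t, ∞) + μ [t, ∞)) / 2`, the map `μ ↦ ∫ S_μ^± dν` is additive in `μ`,
and `∑ᵢ μᵢ = d • ν` for the average measure `ν`. So the sum of the effects is `d ∫ S_ν^± dν`, and
`∫ S_ν^± dν = 1/2` because `2 ∫ S_ν^± dν = P(X < Y) + P(X ≤ Y)` for independent `X, Y ∼ ν`,
and `P(X ≤ Y) = P(Y ≤ X) = 1 - P(X < Y)` by symmetry.
-/

open MeasureTheory Set
open scoped ENNReal

namespace MeasureTheory.Measure

variable {α : Type*} [LinearOrder α] [TopologicalSpace α] [OrderClosedTopology α]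
  [MeasurableSpace α] [BorelSpace α]

lemma measurable_measure_Ioi (μ : Measure α) : Measurable fun t => μ (Ioi t) :=
  Antitone.measurable fun _ _ h => measure_mono (Ioi_subset_Ioi h)

lemma measurable_measure_Ici (μ : Measure α) : Measurable fun t => μ (Ici t) :=
  Antitone.measurable fun _ _ h => measure_mono (Ici_subset_Ici.2 h)

lemma lintegral_measure_Ioi_add_lintegral_measure_Ici [SecondCountableTopology α]
    (μ ν : Measure α) [SFinite μ] [SFinite ν] :
    ∫⁻ t, ν (Ioi t) ∂μ + ∫⁻ t, μ (Ici t) ∂ν = μ univ * ν univ := by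
  have hlt : MeasurableSet {p : α × α | p.1 < p.2} :=
    measurableSet_lt measurable_fst measurable_snd
  have hIoi : ∫⁻ t, ν (Ioi t) ∂μ = μ.prod ν {p | p.1 < p.2} := (prod_apply hlt).symm
  have hIci : ∫⁻ t, μ (Ici t) ∂ν = μ.prod ν {p | p.1 < p.2}ᶜ := by
    rw [← prod_swap, map_apply measurable_swap hlt.compl,
      prod_apply (hlt.compl.preimage measurable_swap)]
    simp [compl_ofPred, Ici, preimage, not_lt]
  rw [hIoi, hIci, measure_add_measure_compl hlt, ← univ_prod_univ, prod_prod]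

lemma lintegral_measure_Ioi_add_measure_Ici_self [SecondCountableTopology α]
    (ν : Measure α) [SFinite ν] :
    ∫⁻ t, ν (Ioi t) + ν (Ici t) ∂ν = ν univ * ν univ := by
  rw [lintegral_add_left (measurable_measure_Ioi ν),
    lintegral_measure_Ioi_add_lintegral_measure_Ici]

lemma sum_lintegral_measure_Ioi_add_measure_Ici {ι : Type*} (s : Finset ι)
    (μ : ι → Measure α) (ν : Measure α) :
    ∑ i ∈ s, ∫⁻ t, μ i (Ioi t) + μ i (Ici t) ∂ν
      = ∫⁻ t, (∑ i ∈ s, μ i) (Ioi t) + (∑ i ∈ s, μ i) (Ici t) ∂ν := by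
  rw [← lintegral_finsetSum (f := fun i t => μ i (Ioi t) + μ i (Ici t)) s fun i _ =>
    (measurable_measure_Ioi (μ i)).add (measurable_measure_Ici (μ i))]
  simp only [coe_finsetSum, Finset.sum_apply, Finset.sum_add_distrib]

lemma integral_toReal_measure_Ioi_add_measure_Ici (μ ν : Measure α) [IsFiniteMeasure μ] :
    ∫ t, ((μ (Ioi t)).toReal + (μ (Ici t)).toReal) / 2 ∂ν
      = (∫⁻ t, μ (Ioi t) + μ (Ici t) ∂ν).toReal / 2 := by
  simp_rw [← ENNReal.toReal_add (measure_ne_top _ _) (measure_ne_top _ _), div_eq_mul_inv,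
    integral_mul_const]
  congr 1
  exact integral_toReal ((measurable_measure_Ioi μ).add (measurable_measure_Ici μ)).aemeasurable
    (.of_forall fun t => ENNReal.add_lt_top.2 ⟨measure_lt_top _ _, measure_lt_top _ _⟩)

end MeasureTheory.Measure

lemma MeasureTheory.isProbabilityMeasure_average {α : Type*} [MeasurableSpace α] {d : ℕ}
    (hd : d ≠ 0) (μ : Fin d → Measure α) [∀ i, IsProbabilityMeasure (μ i)] :
    IsProbabilityMeasure ((d : ℝ≥0∞)⁻¹ • ∑ j, μ j) := by
  constructor
  simp [ENNReal.inv_mul_cancel, hd]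

/-- `S̄` is the survival function of the average measure `ν = d⁻¹ • ∑ j, μ j`, so
`p i = -∫ S_i^± dS̄ = ∫ S_i^± dν`. -/
theorem stmt2 {d : ℕ} (hd : 0 < d) (μ : Fin d → Measure ℝ)
    (hprob : ∀ i, IsProbabilityMeasure (μ i)) :
    (1 / d : ℝ) *
        ∑ i, ∫ t, ((μ i (Ioi t)).toReal + (μ i (Ici t)).toReal) / 2
          ∂((d : ℝ≥0∞)⁻¹ • ∑ j, μ j)
      = 1 / 2 := by
  set ν : Measure ℝ := (d : ℝ≥0∞)⁻¹ • ∑ j, μ j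
  have hd' : (d : ℝ≥0∞) ≠ 0 := by exact_mod_cast hd.ne'
  have hν : IsProbabilityMeasure ν := isProbabilityMeasure_average hd.ne' μ
  have hsum : ∑ j, μ j = (d : ℝ≥0∞) • ν := by
    rw [smul_smul, ENNReal.mul_inv_cancel hd' (ENNReal.natCast_ne_top d), one_smul]
  have htotal : ∑ i, ∫⁻ t, μ i (Ioi t) + μ i (Ici t) ∂ν = d := by
    simp_rw [Measure.sum_lintegral_measure_Ioi_add_measure_Ici, hsum, Measure.smul_apply,
      smul_eq_mul, ← mul_add]
    rw [lintegral_const_mul' _ _ (ENNReal.natCast_ne_top d),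
      Measure.lintegral_measure_Ioi_add_measure_Ici_self, measure_univ, mul_one, mul_one]
  have hfinite := ENNReal.sum_ne_top.1 (htotal ▸ ENNReal.natCast_ne_top d)
  simp_rw [Measure.integral_toReal_measure_Ioi_add_measure_Ici]
  rw [← Finset.sum_div, ← ENNReal.toReal_sum hfinite, htotal, ENNReal.toReal_natCast]
  field_simp
end
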